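/- arXiv:0902.0657 — 3 statements merged into one kernel-verified Lean document; each statement's English description precedes it below -/
import Mathlib

section
/- Let H ∈ {0,1}^{m×n}. A binary vector u ∈ {0,1}^n belongs to the fundamental polytope P(H) if and only if Hu ≡ 0 (mod 2), i.e., if and only if u is a codeword of the binary linear code defined by H. In particular, the integral points of P(H) are exactly the codewords. -/
/-! For a binary `u`, the left-hand side of the parity inequality of `(j, V)` counts the symmetric
difference of `V` and the set `A` of ones of `u` in row `j`. So it fails exactly when `V = A`, and
some parity inequality of row `j` fails iff `A` itself has odd cardinality. -/

/-- Support of row `j` of a binary matrix `H`. -/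
def supp {m n : ℕ} (H : Fin m → Fin n → Bool) (j : Fin m) : Finset (Fin n) :=
  Finset.univ.filter (fun i => H j i)

/-- Left-hand side of the parity inequality associated with `(j, V)` at `u`. -/
def LHS {m n : ℕ} (H : Fin m → Fin n → Bool) (j : Fin m) (V : Finset (Fin n))
    (u : Fin n → ℝ) : ℝ :=
  ∑ i ∈ V, (1 - u i) + ∑ i ∈ supp H j \ V, u i

/-- The fundamental polytope `P(H)`: all `u ∈ [0,1]^n` satisfying every parity
inequality of `H`. -/
def fundamentalPolytope {m n : ℕ} (H : Fin m → Fin n → Bool) : Set (Fin n → ℝ) :=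
  {u | (∀ i, 0 ≤ u i ∧ u i ≤ 1) ∧
    ∀ j, ∀ V : Finset (Fin n), V ⊆ supp H j → Odd V.card → 1 ≤ LHS H j V u}

open Finset

lemma sum_eq_card_filter_of_binary {ι : Type*} (s : Finset ι) (u : ι → ℝ)
    (hu : ∀ i ∈ s, u i = 0 ∨ u i = 1) : ∑ i ∈ s, u i = #(s.filter (u · = 1)) := by
  rw [Finset.natCast_card_filter]
  refine sum_congr rfl fun i hi => ?_
  rcases hu i hi with h | h <;> simp [h]

lemma sum_one_sub_eq_card_filter_of_binary {ι : Type*} (s : Finset ι) (u : ι → ℝ)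
    (hu : ∀ i ∈ s, u i = 0 ∨ u i = 1) : ∑ i ∈ s, (1 - u i) = #(s.filter (u · ≠ 1)) := by
  rw [Finset.natCast_card_filter]
  refine sum_congr rfl fun i hi => ?_
  rcases hu i hi with h | h <;> simp [h]

section ParityInequality

variable {m n : ℕ} {H : Fin m → Fin n → Bool} {j : Fin m} {V : Finset (Fin n)} {u : Fin n → ℝ}

lemma LHS_eq_card_sdiff_add_card_sdiff (hu : ∀ i, u i = 0 ∨ u i = 1) (hV : V ⊆ supp H j) :
    LHS H j V u =
      #(V \ (supp H j).filter (u · = 1)) + #((supp H j).filter (u · = 1) \ V) := by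
  rw [LHS, sum_one_sub_eq_card_filter_of_binary _ _ fun i _ => hu i,
    sum_eq_card_filter_of_binary _ _ fun i _ => hu i]
  have hV' : ∀ i ∈ V, i ∈ supp H j := fun i hi => hV hi
  congr 3 <;> ext i <;> simp only [mem_filter, mem_sdiff] <;> grind

lemma one_le_LHS_iff (hu : ∀ i, u i = 0 ∨ u i = 1) (hV : V ⊆ supp H j) :
    1 ≤ LHS H j V u ↔ V ≠ (supp H j).filter (u · = 1) := by
  rw [LHS_eq_card_sdiff_add_card_sdiff hu hV, ← Nat.cast_add, Nat.one_le_cast,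
    Nat.one_le_iff_ne_zero, Ne, Nat.add_eq_zero_iff, card_eq_zero, card_eq_zero, sdiff_eq_empty_iff_subset,
    sdiff_eq_empty_iff_subset, ← subset_antisymm_iff]

end ParityInequality

/-- a binary vector `u` belongs to the fundamental polytope `P(H)`
iff `H u ≡ 0 (mod 2)`, i.e. iff `u` is a codeword of the binary linear code
defined by `H` (on each row the number of ones of `u` is even). -/
theorem stmt_2 (m n : ℕ) (H : Fin m → Fin n → Bool)
    (u : Fin n → ℝ) (hu : ∀ i, u i = 0 ∨ u i = 1) :
    u ∈ fundamentalPolytope H ↔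
      ∀ j, Even ((supp H j).filter (fun i => u i = 1)).card := by
  have hbox : ∀ i, 0 ≤ u i ∧ u i ≤ 1 := fun i => by rcases hu i with h | h <;> simp [h]
  simp only [fundamentalPolytope, Set.mem_ofPred_eq, hbox, implies_true, true_and]
  refine ⟨fun h j => ?_, fun h j V hV hodd => ?_⟩
  · by_contra hodd
    rw [Nat.not_even_iff_odd] at hodd
    exact (one_le_LHS_iff hu (filter_subset _ _)).1 (h j _ (filter_subset _ _) hodd) rfl
  · rw [one_le_LHS_iff hu hV]
    rintro rfl
    exact Nat.not_even_iff_odd.2 hodd (h j)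
end

section
/- Let H ∈ {0,1}^{m×n}, let j be a row index, and let x⁰ ∈ [0,1]^n. If for some odd-cardinality subset V ⊆ N(j) the parity inequality associated with (j,V) is active at x⁰ (i.e., LHS_{j,V}(x⁰) = 1), then for every odd-cardinality subset V' ⊆ N(j) the parity inequality associated with (j,V') is satisfied at x⁰ (i.e., LHS_{j,V'}(x⁰) ≥ 1). -/
open scoped symmDiff

namespace Finset

variable {α : Type*} [DecidableEq α] {s t : Finset α}

theorem card_symmDiff_add_two_mul_card_inter (s t : Finset α) :
    #(s ∆ t) + 2 * #(s ∩ t) = #s + #t := by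
  have hdisj : Disjoint (s \ t) (t \ s) := disjoint_sdiff_sdiff
  rw [symmDiff_def, sup_eq_union, card_union_of_disjoint hdisj]
  have hs := card_sdiff_add_card_inter s t
  have ht := card_sdiff_add_card_inter t s
  rw [inter_comm] at ht
  omega

theorem two_le_card_symmDiff_of_odd (hs : Odd #s) (ht : Odd #t) (hst : s ≠ t) :
    2 ≤ #(s ∆ t) := by
  have hne : #(s ∆ t) ≠ 0 := by simpa [card_eq_zero] using hst
  have hsum := card_symmDiff_add_two_mul_card_inter s t
  obtain ⟨a, ha⟩ := hs
  obtain ⟨b, hb⟩ := ht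
  omega

end Finset

open Finset

theorem LHS_eq_sum_ite {m n : ℕ} (H : Fin m → Fin n → Bool) (j : Fin m)
    {W : Finset (Fin n)} (hW : W ⊆ supp H j) (u : Fin n → ℝ) :
    LHS H j W u = ∑ i ∈ supp H j, (if i ∈ W then 1 - u i else u i) := by
  rw [sum_ite, filter_mem_eq_inter, inter_eq_right.mpr hW, LHS]
  congr 1
  exact sum_congr (by ext; simp) fun _ _ => rfl

theorem indicator_symmDiff_le_add {α : Type*} [DecidableEq α] (s t : Finset α) (a : α)
    {x : ℝ} (hx₀ : 0 ≤ x) (hx₁ : x ≤ 1) :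
    (if a ∈ s ∆ t then (1 : ℝ) else 0) ≤
      (if a ∈ s then 1 - x else x) + (if a ∈ t then 1 - x else x) := by
  by_cases hs : a ∈ s <;> by_cases ht : a ∈ t <;> simp [mem_symmDiff, hs, ht] <;> linarith

theorem card_symmDiff_le_LHS_add_LHS {m n : ℕ} (H : Fin m → Fin n → Bool) (j : Fin m)
    {u : Fin n → ℝ} (hu : ∀ i, 0 ≤ u i ∧ u i ≤ 1)
    {W W' : Finset (Fin n)} (hW : W ⊆ supp H j) (hW' : W' ⊆ supp H j) :
    (#(W ∆ W') : ℝ) ≤ LHS H j W u + LHS H j W' u := by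
  have hsub : W ∆ W' ⊆ supp H j := symmDiff_le_sup.trans (union_subset hW hW')
  rw [LHS_eq_sum_ite H j hW, LHS_eq_sum_ite H j hW', ← sum_add_distrib]
  calc (#(W ∆ W') : ℝ) = ∑ i ∈ supp H j, (if i ∈ W ∆ W' then (1 : ℝ) else 0) := by
        rw [sum_boole, filter_mem_eq_inter, inter_eq_right.mpr hsub]
    _ ≤ _ := sum_le_sum fun i _ => indicator_symmDiff_le_add W W' i (hu i).1 (hu i).2

/-- if some parity inequality of row `j` is active at
`x⁰ ∈ [0,1]^n`, then all parity inequalities of row `j` are satisfied at `x⁰`. -/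
theorem stmt_5 (m n : ℕ) (H : Fin m → Fin n → Bool) (j : Fin m)
    (x0 : Fin n → ℝ) (hx0 : ∀ i, 0 ≤ x0 i ∧ x0 i ≤ 1)
    (V : Finset (Fin n)) (hVsub : V ⊆ supp H j) (hVodd : Odd V.card)
    (hactive : LHS H j V x0 = 1) :
    ∀ V' : Finset (Fin n), V' ⊆ supp H j → Odd V'.card →
      1 ≤ LHS H j V' x0 := by
  intro V' hV'sub hV'odd
  by_cases hVV' : V = V'
  · rw [← hVV', hactive]
  have htwo : (2 : ℝ) ≤ #(V ∆ V') := by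
    exact_mod_cast two_le_card_symmDiff_of_odd hVodd hV'odd hVV'
  linarith [card_symmDiff_le_LHS_add_LHS H j hx0 hVsub hV'sub]
end

section
/- Let H ∈ {0,1}^{m×n}. Every vertex (extreme point) of the fundamental polytope P(H) has at most m fractional entries, i.e., at most m coordinates whose value is not 0 or 1. In particular, every pseudocodeword of LP decoding has at most m fractional entries. -/
/-!
Suppose a vertex `u` had more than `m` fractional coordinates. Choosing one tight parity inequality
per row gives `m` linear conditions, so some nonzero direction `d` supported on the fractional
coordinates lies in all their hyperplanes. Two distinct tight inequalities of the same row differ on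
every fractional coordinate of the row, so their linear parts agree up to sign on `d`: every tight
inequality stays tight along `d`, hence `u ± t • d ∈ P(H)` for small `t`, contradicting extremality.
-/

open Finset Filter Topology
open scoped symmDiff

theorem Finset.card_symmDiff_add_two_mul_card_inter_s13 {α : Type*} [DecidableEq α]
    (s t : Finset α) : #(s ∆ t) + 2 * #(s ∩ t) = #s + #t := by
  rw [symmDiff_def, sup_eq_union, card_union_of_disjoint disjoint_sdiff_sdiff]
  have hs := card_sdiff_add_card_inter s t
  have ht := card_sdiff_add_card_inter t s
  rw [inter_comm t s] at ht
  omega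

theorem Finset.even_card_symmDiff {α : Type*} [DecidableEq α] {s t : Finset α}
    (hs : Odd #s) (ht : Odd #t) : Even #(s ∆ t) := by
  have h := card_symmDiff_add_two_mul_card_inter_s13 s t
  rw [Nat.even_iff]; rw [Nat.odd_iff] at hs ht
  omega

theorem eq_zero_of_mem_extremePoints_of_eventually_add_smul_mem {E : Type*} [AddCommGroup E]
    [Module ℝ E] {P : Set E} {u d : E} (hu : u ∈ P.extremePoints ℝ)
    (hd : ∀ᶠ t in 𝓝 (0 : ℝ), u + t • d ∈ P) : d = 0 := by
  obtain ⟨ε, hε, hball⟩ := Metric.eventually_nhds_iff.1 hd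
  have hpos : u + (ε / 2) • d ∈ P := hball (by simp [abs_of_pos hε, hε])
  have hneg : u + (-(ε / 2)) • d ∈ P := hball (by simp [abs_of_pos hε, hε])
  have hmid : u ∈ openSegment ℝ (u + (ε / 2) • d) (u + (-(ε / 2)) • d) :=
    ⟨1 / 2, 1 / 2, by norm_num, by norm_num, by norm_num, by module⟩
  have := hu.2 hpos hneg hmid
  rw [add_eq_left, smul_eq_zero] at this
  exact this.resolve_left (by positivity)

theorem eventually_nonneg_add_mul {a b : ℝ} (ha : 0 ≤ a) (hb : a = 0 → b = 0) :
    ∀ᶠ t in 𝓝 (0 : ℝ), 0 ≤ a + t * b := by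
  rcases ha.eq_or_lt with rfl | ha
  · simp [hb rfl]
  · have hlim : Tendsto (fun t : ℝ => a + t * b) (𝓝 0) (𝓝 a) :=
      (continuous_const.add (continuous_id.mul continuous_const)).tendsto' 0 a (by simp)
    exact (hlim.eventually (lt_mem_nhds ha)).mono fun _ h => h.le

theorem LinearMap.exists_ne_zero_supported_apply_eq_zero {K ι M : Type*} [Field K] [Fintype ι]
    [AddCommGroup M] [Module K M] [FiniteDimensional K M] (f : (ι → K) →ₗ[K] M)
    (F : Finset ι) (hF : Module.finrank K M < #F) :
    ∃ d : ι → K, d ≠ 0 ∧ (∀ i ∉ F, d i = 0) ∧ f d = 0 := by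
  classical
  let g := f.prod (LinearMap.funLeft K K (Subtype.val : {i // i ∉ F} → ι))
  have hcard : Fintype.card {i // i ∉ F} = Fintype.card ι - #F := by simp
  have hrank : Module.finrank K (M × ({i // i ∉ F} → K)) < Module.finrank K (ι → K) := by
    simp only [Module.finrank_prod, Module.finrank_fintype_fun_eq_card, hcard]
    have := F.card_le_univ
    omega
  obtain ⟨d, hd, hd0⟩ := (Submodule.ne_bot_iff _).1 (ker_ne_bot_of_finrank_lt (f := g) hrank)
  have hd : f d = 0 ∧ _ := Prod.mk_eq_zero.1 (mem_ker.1 hd)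
  exact ⟨d, hd0, fun i hi => congrFun hd.2 ⟨i, hi⟩, hd.1⟩

section FundamentalPolytope

variable {m n : ℕ} {H : Fin m → Fin n → Bool} {j : Fin m} {V V' : Finset (Fin n)}
  {u d : Fin n → ℝ}

def IsTight (H : Fin m → Fin n → Bool) (u : Fin n → ℝ) (j : Fin m) (V : Finset (Fin n)) :
    Prop :=
  V ⊆ supp H j ∧ Odd #V ∧ LHS H j V u = 1

def parityTerm (V : Finset (Fin n)) (u : Fin n → ℝ) (i : Fin n) : ℝ :=
  if i ∈ V then 1 - u i else u i

theorem LHS_eq_sum_parityTerm (hV : V ⊆ supp H j) (u : Fin n → ℝ) :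
    LHS H j V u = ∑ i ∈ supp H j, parityTerm V u i := by
  rw [LHS, ← sum_sdiff hV, add_comm]
  congr 1 <;> refine sum_congr rfl fun i hi => ?_
  · simp [parityTerm, (mem_sdiff.1 hi).2]
  · simp [parityTerm, hi]

theorem parityTerm_nonneg (hu : ∀ i, 0 ≤ u i ∧ u i ≤ 1) (i : Fin n) : 0 ≤ parityTerm V u i := by
  unfold parityTerm
  split_ifs <;> linarith [hu i]

theorem parityTerm_pos (hu : ∀ i, 0 ≤ u i ∧ u i ≤ 1) {i : Fin n} (h0 : u i ≠ 0) (h1 : u i ≠ 1) :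
    0 < parityTerm V u i := by
  unfold parityTerm
  split_ifs
  · exact sub_pos.2 ((hu i).2.lt_of_ne h1)
  · exact (hu i).1.lt_of_ne' h0

theorem parityTerm_add_parityTerm (u : Fin n → ℝ) (i : Fin n) :
    parityTerm V u i + parityTerm V' u i = if i ∈ V ∆ V' then 1 else 2 * parityTerm V u i := by
  unfold parityTerm
  by_cases h : i ∈ V <;> by_cases h' : i ∈ V' <;> simp [h, h', mem_symmDiff] <;> ring

/-- Adding the two tight inequalities, each coordinate of `V ∆ V'` contributes `1` and every other
coordinate twice its parity term; as `#(V ∆ V')` is even and positive, the others contribute `0`. -/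
theorem mem_symmDiff_of_isTight (hu : ∀ i, 0 ≤ u i ∧ u i ≤ 1) (hV : IsTight H u j V)
    (hV' : IsTight H u j V') (hne : V ≠ V') {i : Fin n} (hi : i ∈ supp H j) (h0 : u i ≠ 0)
    (h1 : u i ≠ 1) : i ∈ V ∆ V' := by
  by_contra hiD
  set D := V ∆ V'
  have hD : D ⊆ supp H j := symmDiff_le_sup.trans (union_subset hV.1 hV'.1)
  have hsum : (2 : ℝ) = #D + 2 * ∑ x ∈ supp H j \ D, parityTerm V u x := by
    calc (2 : ℝ) = ∑ x ∈ supp H j, (parityTerm V u x + parityTerm V' u x) := by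
          rw [sum_add_distrib, ← LHS_eq_sum_parityTerm hV.1, ← LHS_eq_sum_parityTerm hV'.1,
            hV.2.2, hV'.2.2]
          norm_num
      _ = ∑ x ∈ supp H j \ D, 2 * parityTerm V u x + ∑ x ∈ D, 1 := by
          rw [← sum_sdiff hD]
          congr 1 <;> refine sum_congr rfl fun x hx => ?_
          · rw [parityTerm_add_parityTerm, if_neg (mem_sdiff.1 hx).2]
          · rw [parityTerm_add_parityTerm, if_pos hx]
      _ = #D + 2 * ∑ x ∈ supp H j \ D, parityTerm V u x := by
          rw [← mul_sum, sum_const, nsmul_one, add_comm]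
  have hcard : 2 ≤ #D := by
    obtain ⟨k, hk⟩ : Even #D := even_card_symmDiff hV.2.1 hV'.2.1
    have : #D ≠ 0 := by simpa [D, card_eq_zero, symmDiff_eq_bot] using hne
    omega
  have hle : parityTerm V u i ≤ ∑ x ∈ supp H j \ D, parityTerm V u x :=
    single_le_sum (fun x _ => parityTerm_nonneg hu x) (mem_sdiff.2 ⟨hi, hiD⟩)
  have : (2 : ℝ) ≤ #D := by exact_mod_cast hcard
  linarith [parityTerm_pos (V := V) hu h0 h1]

def paritySlope (H : Fin m → Fin n → Bool) (j : Fin m) (V : Finset (Fin n)) :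
    (Fin n → ℝ) →ₗ[ℝ] ℝ where
  toFun d := ∑ i ∈ supp H j, if i ∈ V then -d i else d i
  map_add' d e := by
    rw [← sum_add_distrib]
    exact sum_congr rfl fun i _ => by simp only [Pi.add_apply]; split_ifs <;> ring
  map_smul' c d := by
    rw [RingHom.id_apply, smul_eq_mul, mul_sum]
    exact sum_congr rfl fun i _ => by simp only [Pi.smul_apply, smul_eq_mul]; split_ifs <;> ring

theorem paritySlope_apply (H : Fin m → Fin n → Bool) (j : Fin m) (V : Finset (Fin n))
    (d : Fin n → ℝ) : paritySlope H j V d = ∑ i ∈ supp H j, if i ∈ V then -d i else d i :=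
  rfl

theorem LHS_add_smul (hV : V ⊆ supp H j) (u d : Fin n → ℝ) (t : ℝ) :
    LHS H j V (u + t • d) = LHS H j V u + t * paritySlope H j V d := by
  rw [LHS_eq_sum_parityTerm hV, LHS_eq_sum_parityTerm hV, paritySlope_apply, mul_sum,
    ← sum_add_distrib]
  refine sum_congr rfl fun i _ => ?_
  simp only [parityTerm, Pi.add_apply, Pi.smul_apply, smul_eq_mul]
  split_ifs <;> ring

theorem paritySlope_eq_neg (hd : ∀ i ∈ supp H j, i ∉ V ∆ V' → d i = 0) :
    paritySlope H j V d = -paritySlope H j V' d := by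
  rw [paritySlope_apply, paritySlope_apply, ← sum_neg_distrib]
  refine sum_congr rfl fun i hi => ?_
  by_cases hD : i ∈ V ∆ V'
  · rcases mem_symmDiff.1 hD with ⟨h, h'⟩ | ⟨h', h⟩ <;> simp [h, h']
  · simp [hd i hi hD]

theorem eventually_add_smul_mem_fundamentalPolytope (hu : u ∈ fundamentalPolytope H)
    (hd : ∀ i, u i = 0 ∨ u i = 1 → d i = 0)
    (hslope : ∀ j V, IsTight H u j V → paritySlope H j V d = 0) :
    ∀ᶠ t in 𝓝 (0 : ℝ), u + t • d ∈ fundamentalPolytope H := by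
  simp only [fundamentalPolytope, Set.mem_ofPred_eq, eventually_and, eventually_all]
  refine ⟨fun i => ⟨?_, ?_⟩, fun j V hV hodd => ?_⟩
  · filter_upwards [eventually_nonneg_add_mul (hu.1 i).1 fun h => hd i (.inl h)] with t ht
    simpa using ht
  · filter_upwards [eventually_nonneg_add_mul (sub_nonneg.2 (hu.1 i).2)
      fun h => neg_eq_zero.2 (hd i (.inr (by linarith)))] with t ht
    simp only [Pi.add_apply, Pi.smul_apply, smul_eq_mul]
    linarith
  · have hslack := eventually_nonneg_add_mul (sub_nonneg.2 (hu.2 j V hV hodd))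
      fun h => hslope j V ⟨hV, hodd, by linarith⟩
    filter_upwards [hslack] with t ht
    rw [LHS_add_smul hV]
    linarith

end FundamentalPolytope

/-- every vertex (extreme point) of the fundamental polytope
`P(H)` has at most `m` fractional entries.  In particular, every
pseudocodeword of LP decoding has at most `m` fractional entries. -/
theorem stmt_13 (m n : ℕ) (H : Fin m → Fin n → Bool)
    (u : Fin n → ℝ) (hu : u ∈ Set.extremePoints ℝ (fundamentalPolytope H)) :
    (Finset.univ.filter (fun i => u i ≠ 0 ∧ u i ≠ 1)).card ≤ m := by
  by_contra! hF
  set F := univ.filter fun i => u i ≠ 0 ∧ u i ≠ 1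
  let W j := Classical.epsilon (IsTight H u j)
  obtain ⟨d, hd0, hdF, hdW⟩ := LinearMap.exists_ne_zero_supported_apply_eq_zero
    (LinearMap.pi fun j => paritySlope H j (W j)) F (by simpa using hF)
  refine hd0 (eq_zero_of_mem_extremePoints_of_eventually_add_smul_mem hu
    (eventually_add_smul_mem_fundamentalPolytope hu.1 (fun i hi => hdF i ?_) fun j V hV => ?_))
  · simp only [F, mem_filter, mem_univ, true_and, not_and_or, not_not]
    exact hi
  have hW : IsTight H u j (W j) := Classical.epsilon_spec ⟨V, hV⟩
  have hWd : paritySlope H j (W j) d = 0 := congrFun hdW j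
  by_cases hVW : V = W j
  · rwa [hVW]
  rw [paritySlope_eq_neg (V' := W j) fun i hi hiD => hdF i fun hiF => hiD
    (mem_symmDiff_of_isTight hu.1.1 hV hW hVW hi (mem_filter.1 hiF).2.1 (mem_filter.1 hiF).2.2),
    hWd, neg_zero]
end
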